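/- Complex linear de Rham curves (Example 2.3): Let η ∈ ℂ with 0 < |η| < 1 and 0 < |1 − η| < 1, and on X = ℂ set f_0(z) = η z̄ and f_1(z) = η + (1 − η) z̄, where z̄ denotes complex conjugation. Let G : [0,1] → ℂ be the unique continuous solution of G(t) = f_0(G(2t)) for 0 ≤ t ≤ 1/2 and G(t) = f_1(G(2t − 1)) for 1/2 ≤ t ≤ 1, with G(0) = 0 and G(1) = 1. Then α = β = −log_2 |η(1 − η)| / 2; if |η(1 − η)| < 1/4 then the Fréchet derivative of G exists and is zero Lebesgue-a.e., and if |η(1 − η)| > 1/4 then G is not Fréchet differentiable at Lebesgue-a.e. t. -/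

import Mathlib

open MeasureTheory Filter Set Topology

noncomputable section

/-- The first digit `A₁(t) = ⌊m t⌋` of the `m`-adic expansion of `t ∈ [0,1)`. -/
def A1 (m : ℕ) (t : ℝ) : ℕ := (⌊(m : ℝ) * t⌋).toNat

/-- The shift map `Ht = m t - ⌊m t⌋` on `[0,1)`. -/
def Hmap (m : ℕ) (t : ℝ) : ℝ := (m : ℝ) * t - ⌊(m : ℝ) * t⌋

/-- `‖T⁻¹‖⁻¹`, with the convention that it is `0` when `T` is not invertible. -/
def coNorm {E : Type*} [NormedAddCommGroup E] [NormedSpace ℝ E] (T : E →L[ℝ] E) : ℝ :=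
  ⨆ A : {A : E ≃L[ℝ] E // (A : E →L[ℝ] E) = T}, ‖(A.1.symm : E →L[ℝ] E)‖⁻¹

/-- The maps `f₀(z) = η z̄` and `f₁(z) = η + (1-η) z̄` of Example 2.3, where `z̄` is the
complex conjugate. -/
def fLin (η : ℂ) : ℕ → ℂ → ℂ := fun i z =>
  if i = 0 then η * (starRingEnd ℂ) z else η + (1 - η) * (starRingEnd ℂ) z

/-- `α = ∫₀¹ -log₂ ‖Df_{A₁(t)}(G(Ht))‖ dt`, the Fréchet derivative being taken over `ℝ`
(`ℂ` is regarded as a real two-dimensional Banach space). -/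
def alphaLin (η : ℂ) (G : ℝ → ℂ) : ℝ :=
  ∫ t in Set.Ico (0 : ℝ) 1, -Real.logb 2 ‖fderiv ℝ (fLin η (A1 2 t)) (G (Hmap 2 t))‖

/-- `β = ∫₀¹ log₂ ‖(Df_{A₁(t)}(G(Ht)))⁻¹‖ dt = ∫₀¹ -log₂ ‖(Df_{A₁(t)}(G(Ht)))⁻¹‖⁻¹ dt`. -/
def betaLin (η : ℂ) (G : ℝ → ℂ) : ℝ :=
  ∫ t in Set.Ico (0 : ℝ) 1, -Real.logb 2 (coNorm (fderiv ℝ (fLin η (A1 2 t)) (G (Hmap 2 t))))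

end

open scoped Finset

/-!
The maps `f₀, f₁` are conjugation followed by multiplication by `η` and `1 - η`: real-linear
similarities with ratios `c₀ = |η|` and `c₁ = |1 - η|`, so `α` and `β` are both the average of
`-log₂ c₀` and `-log₂ c₁`.

Iterating the functional equation, `G` maps the dyadic interval `[k/2ⁿ, (k+1)/2ⁿ]` onto a copy of
the whole curve scaled by `wₙ(k) = ∏ᵢ c_{bᵢ}`, the product of the ratios along the binary digits
`bᵢ` of `k`. Since `∑ₖ wₙ(k)ᵛ = (c₀ᵛ + c₁ᵛ)ⁿ`, a Chernoff bound and Borel–Cantelli show that for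
almost every `t` the weights of the interval containing `t` and of its two neighbours are
eventually below `qⁿ` for some `q < 1/2` if `c₀c₁ < 1/4` (so `G` has increments `o(2⁻ⁿ)` at
scale `2⁻ⁿ` and derivative `0`), and eventually above `σⁿ` for some `σ > 1/2` if `c₀c₁ > 1/4`
(so the increment of `G` across the interval containing `t` is too large for `G` to be
differentiable at `t`).
-/

lemma norm_smul_conjCLE (c : ℂ) : ‖c • (Complex.conjCLE : ℂ →L[ℝ] ℂ)‖ = ‖c‖ := by
  rw [norm_smul, Complex.conjCLE_norm, mul_one]

lemma coNorm_coe {E : Type*} [NormedAddCommGroup E] [NormedSpace ℝ E] (e : E ≃L[ℝ] E) :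
    coNorm (e : E →L[ℝ] E) = ‖(e.symm : E →L[ℝ] E)‖⁻¹ := by
  let : Unique {A : E ≃L[ℝ] E // (A : E →L[ℝ] E) = e} :=
    { default := ⟨e, rfl⟩, uniq := fun A => Subtype.ext (ContinuousLinearEquiv.coe_inj.1 A.2) }
  rw [coNorm, ciSup_unique]
  rfl

lemma coNorm_smul_conjCLE {c : ℂ} (hc : c ≠ 0) :
    coNorm (c • (Complex.conjCLE : ℂ →L[ℝ] ℂ)) = ‖c‖ := by
  have hc' : starRingEnd ℂ c ≠ 0 := by simpa using hc
  let e : ℂ ≃L[ℝ] ℂ := .equivOfInverse (c • Complex.conjCLE)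
    ((starRingEnd ℂ c)⁻¹ • Complex.conjCLE)
    (fun z => by simp [hc']) (fun z => by simp [hc])
  rw [show c • (Complex.conjCLE : ℂ →L[ℝ] ℂ) = e from rfl, coNorm_coe]
  change ‖(starRingEnd ℂ c)⁻¹ • (Complex.conjCLE : ℂ →L[ℝ] ℂ)‖⁻¹ = ‖c‖
  rw [norm_smul_conjCLE, norm_inv, Complex.norm_conj, inv_inv]

lemma hasFDerivAt_fLin (η : ℂ) (i : ℕ) (z : ℂ) :
    HasFDerivAt (fLin η i) ((if i = 0 then η else 1 - η) • (Complex.conjCLE : ℂ →L[ℝ] ℂ)) z := by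
  unfold fLin
  split_ifs
  · exact (η • (Complex.conjCLE : ℂ →L[ℝ] ℂ)).hasFDerivAt
  · exact ((1 - η) • (Complex.conjCLE : ℂ →L[ℝ] ℂ)).hasFDerivAt.const_add η

lemma integral_Ico_comp_A1_two (φ : ℕ → ℝ) :
    ∫ t in Ico (0 : ℝ) 1, φ (A1 2 t) = (φ 0 + φ 1) / 2 := by
  have h₀ : EqOn (fun t => φ (A1 2 t)) (fun _ => φ 0) (Ico 0 (1 / 2)) := fun t ht => by
    have : ⌊(2 : ℝ) * t⌋ = 0 := Int.floor_eq_zero_iff.2 ⟨by linarith [ht.1], by linarith [ht.2]⟩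
    simp [A1, this]
  have h₁ : EqOn (fun t => φ (A1 2 t)) (fun _ => φ 1) (Ico (1 / 2) 1) := fun t ht => by
    have : ⌊(2 : ℝ) * t⌋ = 1 :=
      Int.floor_eq_iff.2 ⟨by push_cast; linarith [ht.1], by push_cast; linarith [ht.2]⟩
    simp [A1, this]
  rw [← Ico_union_Ico_eq_Ico (by norm_num : (0 : ℝ) ≤ 1 / 2) (by norm_num),
    setIntegral_union Ico_disjoint_Ico_same measurableSet_Ico
      ((integrableOn_congr_fun h₀ measurableSet_Ico).2 (integrableOn_const (by simp)))
      ((integrableOn_congr_fun h₁ measurableSet_Ico).2 (integrableOn_const (by simp))),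
    setIntegral_congr_fun measurableSet_Ico h₀, setIntegral_congr_fun measurableSet_Ico h₁]
  norm_num [Real.volume_Ico]
  ring

lemma integral_logb_norm_coeff {η : ℂ} (hη : η ≠ 0) (hη' : 1 - η ≠ 0) :
    ∫ t in Ico (0 : ℝ) 1, -Real.logb 2 ‖if A1 2 t = 0 then η else 1 - η‖ =
      -Real.logb 2 ‖η * (1 - η)‖ / 2 := by
  rw [integral_Ico_comp_A1_two (fun i => -Real.logb 2 ‖if i = 0 then η else 1 - η‖), norm_mul,
    Real.logb_mul (norm_ne_zero_iff.2 hη) (norm_ne_zero_iff.2 hη')]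
  simp only [↓reduceIte, one_ne_zero]
  ring

lemma alphaLin_eq {η : ℂ} (hη : η ≠ 0) (hη' : 1 - η ≠ 0) (G : ℝ → ℂ) :
    alphaLin η G = -Real.logb 2 ‖η * (1 - η)‖ / 2 := by
  simp only [alphaLin, fun i z => (hasFDerivAt_fLin η i z).fderiv, norm_smul_conjCLE]
  exact integral_logb_norm_coeff hη hη'

lemma betaLin_eq {η : ℂ} (hη : η ≠ 0) (hη' : 1 - η ≠ 0) (G : ℝ → ℂ) :
    betaLin η G = -Real.logb 2 ‖η * (1 - η)‖ / 2 := by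
  have hcoeff (i : ℕ) : (if i = 0 then η else 1 - η) ≠ 0 := by split_ifs <;> assumption
  simp only [betaLin, fun i z => (hasFDerivAt_fLin η i z).fderiv, coNorm_smul_conjCLE (hcoeff _)]
  exact integral_logb_norm_coeff hη hη'

def dyadicWeight (c₀ c₁ : ℝ) (n k : ℕ) : ℝ :=
  ∏ i ∈ Finset.range n, if k.testBit i then c₁ else c₀

section DyadicWeight

variable {c₀ c₁ : ℝ}

lemma dyadicWeight_pos (h₀ : 0 < c₀) (h₁ : 0 < c₁) (n k : ℕ) : 0 < dyadicWeight c₀ c₁ n k :=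
  Finset.prod_pos fun _ _ => by split_ifs <;> assumption

lemma dyadicWeight_nonneg (h₀ : 0 ≤ c₀) (h₁ : 0 ≤ c₁) (n k : ℕ) :
    0 ≤ dyadicWeight c₀ c₁ n k :=
  Finset.prod_nonneg fun _ _ => by split_ifs <;> assumption

lemma dyadicWeight_succ_of_lt {n k : ℕ} (hk : k < 2 ^ n) :
    dyadicWeight c₀ c₁ (n + 1) k = c₀ * dyadicWeight c₀ c₁ n k := by
  rw [dyadicWeight, Finset.prod_range_succ, Nat.testBit_eq_false_of_lt hk, mul_comm]
  rfl

lemma dyadicWeight_succ_two_pow_add {n j : ℕ} (hj : j < 2 ^ n) :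
    dyadicWeight c₀ c₁ (n + 1) (2 ^ n + j) = c₁ * dyadicWeight c₀ c₁ n j := by
  rw [dyadicWeight, Finset.prod_range_succ, Nat.testBit_two_pow_add_eq,
    Nat.testBit_eq_false_of_lt hj, mul_comm]
  refine congrArg _ (Finset.prod_congr rfl fun i hi => ?_)
  rw [Nat.testBit_two_pow_add_gt (Finset.mem_range.1 hi)]

lemma dyadicWeight_rpow (h₀ : 0 ≤ c₀) (h₁ : 0 ≤ c₁) (n k : ℕ) (v : ℝ) :
    dyadicWeight c₀ c₁ n k ^ v = dyadicWeight (c₀ ^ v) (c₁ ^ v) n k := by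
  rw [dyadicWeight, ← Real.finsetProd_rpow _ _ fun i _ => by split_ifs <;> assumption]
  simp only [dyadicWeight, apply_ite (· ^ v)]

lemma sum_dyadicWeight (n : ℕ) :
    ∑ k ∈ Finset.range (2 ^ n), dyadicWeight c₀ c₁ n k = (c₀ + c₁) ^ n := by
  induction n with
  | zero => simp [dyadicWeight]
  | succ n ih =>
    rw [pow_succ, mul_two, Finset.sum_range_add,
      Finset.sum_congr rfl fun k hk => dyadicWeight_succ_of_lt (Finset.mem_range.1 hk),
      Finset.sum_congr rfl fun j hj => dyadicWeight_succ_two_pow_add (Finset.mem_range.1 hj),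
      ← Finset.mul_sum, ← Finset.mul_sum, ih]
    ring

lemma card_pow_le_dyadicWeight_le (h₀ : 0 ≤ c₀) (h₁ : 0 ≤ c₁) {ρ : ℝ} (hρ : 0 < ρ) (n : ℕ) :
    (#{k ∈ Finset.range (2 ^ n) | ρ ^ n ≤ dyadicWeight c₀ c₁ n k} : ℝ) ≤ ((c₀ + c₁) / ρ) ^ n := by
  rw [div_pow, le_div_iff₀ (pow_pos hρ n), ← sum_dyadicWeight, ← nsmul_eq_mul]
  refine (Finset.card_nsmul_le_sum _ _ _ fun k hk => (Finset.mem_filter.1 hk).2).trans ?_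
  exact Finset.sum_le_sum_of_subset_of_nonneg (Finset.filter_subset _ _) fun k _ _ =>
    dyadicWeight_nonneg h₀ h₁ n k

end DyadicWeight

section SelfSimilar

variable {E : Type*} [NormedAddCommGroup E] {c₀ c₁ : ℝ} {G : ℝ → E}

def DyadicSelfSimilar (c₀ c₁ : ℝ) (G : ℝ → E) : Prop :=
  ∀ n k : ℕ, k < 2 ^ n → ∀ a ∈ Icc (k : ℝ) (k + 1), ∀ b ∈ Icc (k : ℝ) (k + 1),
    ‖G (a / 2 ^ n) - G (b / 2 ^ n)‖ = dyadicWeight c₀ c₁ n k * ‖G (a - k) - G (b - k)‖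

lemma div_two_pow_mem_Icc {n k : ℕ} (hk : k < 2 ^ n) {a : ℝ} (ha : a ∈ Icc (k : ℝ) (k + 1)) :
    a / 2 ^ n ∈ Icc (0 : ℝ) 1 := by
  have hk' : (k : ℝ) + 1 ≤ 2 ^ n := by exact_mod_cast hk
  constructor
  · exact div_nonneg (by linarith [ha.1, k.cast_nonneg (α := ℝ)]) (by positivity)
  · rw [div_le_one (by positivity)]
    linarith [ha.2]

theorem dyadicSelfSimilar_of_similar {f₀ f₁ : E → E}
    (hf₀ : ∀ x y, ‖f₀ x - f₀ y‖ = c₀ * ‖x - y‖) (hf₁ : ∀ x y, ‖f₁ x - f₁ y‖ = c₁ * ‖x - y‖)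
    (hG₀ : ∀ x ∈ Icc (0 : ℝ) 1, G (x / 2) = f₀ (G x))
    (hG₁ : ∀ x ∈ Icc (0 : ℝ) 1, G ((x + 1) / 2) = f₁ (G x)) :
    DyadicSelfSimilar c₀ c₁ G := by
  intro n
  induction n with
  | zero =>
    intro k hk a _ b _
    obtain rfl : k = 0 := by simpa using hk
    simp [dyadicWeight]
  | succ n ih =>
    intro k hk a ha b hb
    rcases lt_or_ge k (2 ^ n) with hk' | hk'
    · have hdiv (x : ℝ) : x / 2 ^ (n + 1) = x / 2 ^ n / 2 := by ring
      rw [hdiv, hdiv, hG₀ _ (div_two_pow_mem_Icc hk' ha), hG₀ _ (div_two_pow_mem_Icc hk' hb),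
        hf₀, ih k hk' a ha b hb, dyadicWeight_succ_of_lt hk', mul_assoc]
    · obtain ⟨j, rfl⟩ := Nat.exists_eq_add_of_le hk'
      have hj : j < 2 ^ n := by rw [pow_succ] at hk; omega
      have hshift : ∀ x ∈ Icc ((2 ^ n + j : ℕ) : ℝ) ((2 ^ n + j : ℕ) + 1),
          x - 2 ^ n ∈ Icc (j : ℝ) (j + 1) := fun x hx => by
        push_cast at hx
        exact ⟨by linarith [hx.1], by linarith [hx.2]⟩
      have hdiv (x : ℝ) : x / 2 ^ (n + 1) = ((x - 2 ^ n) / 2 ^ n + 1) / 2 := by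
        field_simp
        ring
      have hsub (x : ℝ) : x - 2 ^ n - j = x - ((2 ^ n + j : ℕ) : ℝ) := by push_cast; ring
      rw [hdiv, hdiv, hG₁ _ (div_two_pow_mem_Icc hj (hshift a ha)),
        hG₁ _ (div_two_pow_mem_Icc hj (hshift b hb)), hf₁, ih j hj _ (hshift a ha) _ (hshift b hb),
        dyadicWeight_succ_two_pow_add hj, mul_assoc, hsub, hsub]

namespace DyadicSelfSimilar

lemma norm_sub_le (hG : DyadicSelfSimilar c₀ c₁ G) (h₀ : 0 ≤ c₀) (h₁ : 0 ≤ c₁) {D : ℝ}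
    (hD : ∀ x ∈ Icc (0 : ℝ) 1, ∀ y ∈ Icc (0 : ℝ) 1, ‖G x - G y‖ ≤ D) {n k : ℕ} (hk : k < 2 ^ n)
    {a b : ℝ} (ha : a ∈ Icc (k : ℝ) (k + 1)) (hb : b ∈ Icc (k : ℝ) (k + 1)) :
    ‖G (a / 2 ^ n) - G (b / 2 ^ n)‖ ≤ dyadicWeight c₀ c₁ n k * D := by
  have hunit : ∀ x ∈ Icc (k : ℝ) (k + 1), x - k ∈ Icc (0 : ℝ) 1 := fun x hx =>
    ⟨by linarith [hx.1], by linarith [hx.2]⟩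
  rw [hG n k hk a ha b hb]
  exact mul_le_mul_of_nonneg_left (hD _ (hunit a ha) _ (hunit b hb))
    (dyadicWeight_nonneg h₀ h₁ n k)

lemma norm_sub_endpoints (hG : DyadicSelfSimilar c₀ c₁ G) {n k : ℕ} (hk : k < 2 ^ n) :
    ‖G ((k + 1) / 2 ^ n) - G (k / 2 ^ n)‖ = dyadicWeight c₀ c₁ n k * ‖G 1 - G 0‖ := by
  rw [hG n k hk _ ⟨by linarith, le_rfl⟩ _ ⟨le_rfl, by linarith⟩, add_sub_cancel_left, sub_self]

end DyadicSelfSimilar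

end SelfSimilar

lemma two_pow_mul_half_pow (n : ℕ) : (2 : ℝ) ^ n * (1 / 2) ^ n = 1 := by
  rw [← mul_pow]; norm_num

section Oscillation

variable {E : Type*} [NormedAddCommGroup E]

/-- Points at distance at most `1` lie in the same or in adjacent unit intervals, which share an
endpoint. -/
lemma norm_sub_le_of_unit_osc {g : ℝ → E} {N : ℕ} {x y ε : ℝ} (hx : x ∈ Ico 0 (N : ℝ))
    (hy : y ∈ Icc 0 (N : ℝ)) (hxy : |y - x| ≤ 1)
    (hosc : ∀ j < N, j ≤ ⌊x⌋₊ + 1 → ⌊x⌋₊ ≤ j + 1 →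
      ∀ a ∈ Icc (j : ℝ) (j + 1), ∀ b ∈ Icc (j : ℝ) (j + 1), ‖g a - g b‖ ≤ ε) :
    ‖g y - g x‖ ≤ 2 * ε := by
  set k := ⌊x⌋₊
  have hkx : (k : ℝ) ≤ x := Nat.floor_le hx.1
  have hxk : x < k + 1 := Nat.lt_floor_add_one x
  have hkN : k < N := (Nat.floor_lt hx.1).2 hx.2
  clear_value k
  have hxI : x ∈ Icc (k : ℝ) (k + 1) := ⟨hkx, hxk.le⟩
  have hε : 0 ≤ ε := (norm_nonneg _).trans (hosc k hkN (by omega) (by omega) x hxI x hxI)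
  obtain ⟨hyx₁, hyx₂⟩ := abs_le.1 hxy
  by_cases hyI : y ∈ Icc (k : ℝ) (k + 1)
  · linarith [hosc k hkN (by omega) (by omega) y hyI x hxI]
  rcases not_and_or.1 hyI with hyk | hyk <;> push Not at hyk
  · obtain ⟨j, rfl⟩ : ∃ j, k = j + 1 :=
      Nat.exists_eq_add_one.2 (Nat.cast_pos.1 (hy.1.trans_lt hyk))
    push_cast at hkx hxk hyk hxI
    calc ‖g y - g x‖ ≤ ‖g y - g (j + 1)‖ + ‖g (j + 1) - g x‖ :=
          norm_sub_le_norm_sub_add_norm_sub _ _ _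
      _ ≤ ε + ε := add_le_add
          (hosc j (by omega) (by omega) (by omega) y ⟨by linarith, hyk.le⟩ _ ⟨by linarith, le_rfl⟩)
          (hosc (j + 1) hkN (by omega) (by omega) _ (by push_cast; exact ⟨le_rfl, by linarith⟩)
            x (by push_cast; exact hxI))
      _ = 2 * ε := by ring
  · have hk₁N : k + 1 < N := by
      have : (k : ℝ) + 1 < N := hyk.trans_le hy.2
      exact_mod_cast this
    calc ‖g y - g x‖ ≤ ‖g y - g (k + 1)‖ + ‖g (k + 1) - g x‖ :=
          norm_sub_le_norm_sub_add_norm_sub _ _ _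
      _ ≤ ε + ε := add_le_add
          (hosc (k + 1) hk₁N (by omega) (by omega) y (by push_cast; exact ⟨hyk.le, by linarith⟩)
            _ (by push_cast; exact ⟨le_rfl, by linarith⟩))
          (hosc k hkN (by omega) (by omega) _ ⟨by linarith, le_rfl⟩ x hxI)
      _ = 2 * ε := by ring

end Oscillation

lemma DyadicSelfSimilar.norm_sub_le_of_dyadicWeight_le {E : Type*} [NormedAddCommGroup E]
    {c₀ c₁ : ℝ} {G : ℝ → E} (hG : DyadicSelfSimilar c₀ c₁ G) (h₀ : 0 ≤ c₀) (h₁ : 0 ≤ c₁) {D : ℝ}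
    (hD : ∀ x ∈ Icc (0 : ℝ) 1, ∀ y ∈ Icc (0 : ℝ) 1, ‖G x - G y‖ ≤ D) {n : ℕ} {t x ε : ℝ}
    (ht : t ∈ Ico (0 : ℝ) 1) (hx : x ∈ Icc (0 : ℝ) 1) (hxt : |x - t| ≤ (1 / 2) ^ n)
    (hw : ∀ j < 2 ^ n, j ≤ ⌊2 ^ n * t⌋₊ + 1 → ⌊2 ^ n * t⌋₊ ≤ j + 1 → dyadicWeight c₀ c₁ n j ≤ ε) :
    ‖G x - G t‖ ≤ 2 * (ε * D) := by
  have hD₀ : 0 ≤ D := (norm_nonneg _).trans (hD 0 ⟨le_rfl, zero_le_one⟩ 0 ⟨le_rfl, zero_le_one⟩)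
  have h2n : (0 : ℝ) < 2 ^ n := by positivity
  have htN : 2 ^ n * t ∈ Ico 0 ((2 ^ n : ℕ) : ℝ) := by
    push_cast; exact ⟨by nlinarith [ht.1], by nlinarith [ht.2]⟩
  have hxN : 2 ^ n * x ∈ Icc 0 ((2 ^ n : ℕ) : ℝ) := by
    push_cast; exact ⟨by nlinarith [hx.1], by nlinarith [hx.2]⟩
  have hxt' : |2 ^ n * x - 2 ^ n * t| ≤ 1 := by
    rw [← mul_sub, abs_mul, abs_of_pos h2n]
    calc 2 ^ n * |x - t| ≤ 2 ^ n * (1 / 2) ^ n := by gcongr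
      _ = 1 := two_pow_mul_half_pow n
  have key := norm_sub_le_of_unit_osc (g := fun y => G (y / 2 ^ n)) htN hxN hxt'
    fun j hj h₁' h₂' a ha b hb =>
      (hG.norm_sub_le h₀ h₁ hD hj ha hb).trans (mul_le_mul_of_nonneg_right (hw j hj h₁' h₂') hD₀)
  simpa only [mul_div_cancel_left₀ _ h2n.ne'] using key

lemma volume_setOf_floor_near_le (F : Finset ℕ) (n a b : ℕ) :
    volume {t : ℝ | 0 ≤ t ∧ ∃ j ∈ F, j ≤ ⌊2 ^ n * t⌋₊ + a ∧ ⌊2 ^ n * t⌋₊ ≤ j + b} ≤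
      ENNReal.ofReal (#F * ((a + b + 1) / 2 ^ n)) := by
  have h2n : (0 : ℝ) < 2 ^ n := by positivity
  have hsub : {t : ℝ | 0 ≤ t ∧ ∃ j ∈ F, j ≤ ⌊2 ^ n * t⌋₊ + a ∧ ⌊2 ^ n * t⌋₊ ≤ j + b} ⊆
      ⋃ j ∈ F, Icc (((j : ℝ) - a) / 2 ^ n) ((j + b + 1) / 2 ^ n) := by
    rintro t ⟨ht, j, hj, hja, hjb⟩
    have hfl := Nat.floor_le (by positivity : 0 ≤ 2 ^ n * t)
    have hlt := Nat.lt_floor_add_one (2 ^ n * t)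
    have hja' : (j : ℝ) ≤ ⌊2 ^ n * t⌋₊ + a := by exact_mod_cast hja
    have hjb' : (⌊2 ^ n * t⌋₊ : ℝ) ≤ j + b := by exact_mod_cast hjb
    refine mem_biUnion hj ⟨?_, ?_⟩
    · rw [div_le_iff₀ h2n]; linarith
    · rw [le_div_iff₀ h2n]; linarith
  refine (measure_mono hsub).trans ((measure_biUnion_finset_le F _).trans ?_)
  have hlen (j : ℕ) : ((j : ℝ) + b + 1) / 2 ^ n - (j - a) / 2 ^ n = (a + b + 1) / 2 ^ n := by ring
  simp only [Real.volume_Icc, hlen, Finset.sum_const, nsmul_eq_mul]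
  rw [ENNReal.ofReal_mul (by positivity), ENNReal.ofReal_natCast]

lemma ae_eventually_forall_near_floor_not {P : ℕ → ℕ → Prop} [∀ n, DecidablePred (P n)]
    (a b : ℕ) {r : ℝ} (hr₀ : 0 ≤ r) (hr₁ : r < 1)
    (hP : ∀ n, (#{j ∈ Finset.range (2 ^ n) | P n j} : ℝ) ≤ (2 * r) ^ n) :
    ∀ᵐ t : ℝ, ∀ᶠ n in atTop, 0 ≤ t → ∀ j < 2 ^ n,
      j ≤ ⌊2 ^ n * t⌋₊ + a → ⌊2 ^ n * t⌋₊ ≤ j + b → ¬ P n j := by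
  set S : ℕ → Set ℝ := fun n => {t : ℝ | 0 ≤ t ∧
    ∃ j ∈ {j ∈ Finset.range (2 ^ n) | P n j}, j ≤ ⌊2 ^ n * t⌋₊ + a ∧ ⌊2 ^ n * t⌋₊ ≤ j + b}
  have hS (n : ℕ) : volume (S n) ≤ ENNReal.ofReal ((a + b + 1) * r ^ n) := by
    refine (volume_setOf_floor_near_le _ n a b).trans (ENNReal.ofReal_le_ofReal ?_)
    calc (#{j ∈ Finset.range (2 ^ n) | P n j} : ℝ) * ((a + b + 1) / 2 ^ n)
        ≤ (2 * r) ^ n * ((a + b + 1) / 2 ^ n) := by gcongr; exact hP n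
      _ = (a + b + 1) * r ^ n := by field_simp; ring
  have hsum : ∑' n, volume (S n) ≠ ⊤ := by
    refine ne_top_of_le_ne_top ?_ (ENNReal.tsum_le_tsum hS)
    rw [← ENNReal.ofReal_tsum_of_nonneg (fun n => by positivity)
      ((summable_geometric_of_lt_one hr₀ hr₁).mul_left _)]
    exact ENNReal.ofReal_ne_top
  filter_upwards [ae_eventually_notMem hsum] with t ht
  filter_upwards [ht] with n hn ht₀ j hj hja hjb hPj
  exact hn ⟨ht₀, j, Finset.mem_filter.2 ⟨Finset.mem_range.2 hj, hPj⟩, hja, hjb⟩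

lemma exists_mean_rpow_lt_one {p q : ℝ} (hp : 0 < p) (hq : 0 < q) (hpq : p * q < 1) :
    ∃ u > (0 : ℝ), (p ^ u + q ^ u) / 2 < 1 := by
  have hd : HasDerivAt (fun u : ℝ => (p ^ u + q ^ u) / 2) ((Real.log p + Real.log q) / 2) 0 := by
    simpa using ((Real.hasStrictDerivAt_const_rpow hp 0).hasDerivAt.add
      (Real.hasStrictDerivAt_const_rpow hq 0).hasDerivAt).div_const 2
  have hneg : (Real.log p + Real.log q) / 2 < 0 := by
    rw [← Real.log_mul hp.ne' hq.ne']
    linarith [Real.log_neg (by positivity) hpq]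
  obtain ⟨u, hu, hu₀⟩ :=
    ((hd.tendsto_slope_zero_right.eventually (gt_mem_nhds hneg)).and self_mem_nhdsWithin).exists
  refine ⟨u, hu₀, ?_⟩
  simp only [zero_add, Real.rpow_zero, smul_eq_mul] at hu
  have := inv_pos.2 (show (0 : ℝ) < u from hu₀)
  nlinarith

section Exponents

variable {c₀ c₁ : ℝ}

lemma eventually_mean_rpow_div_lt_one (h₀ : 0 < c₀) (h₁ : 0 < c₁) {v : ℝ}
    (h : ((2 * c₀) ^ v + (2 * c₁) ^ v) / 2 < 1) :
    ∀ᶠ r in 𝓝 (1 / 2 : ℝ), (c₀ ^ v + c₁ ^ v) / (2 * r ^ v) < 1 := by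
  have hval : (c₀ ^ v + c₁ ^ v) / (2 * (1 / 2 : ℝ) ^ v) = ((2 * c₀) ^ v + (2 * c₁) ^ v) / 2 := by
    rw [Real.mul_rpow zero_le_two h₀.le, Real.mul_rpow zero_le_two h₁.le,
      Real.div_rpow zero_le_one zero_le_two, Real.one_rpow]
    have : (0 : ℝ) < 2 ^ v := by positivity
    field_simp
  have hcont : ContinuousAt (fun r : ℝ => (c₀ ^ v + c₁ ^ v) / (2 * r ^ v)) (1 / 2) :=
    continuousAt_const.div
      (continuousAt_const.mul (Real.continuousAt_rpow_const _ _ (Or.inl (by norm_num))))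
      (by positivity)
  exact hcont.eventually_lt continuousAt_const (hval ▸ h)

lemma exists_rpow_mean_lt_of_mul_lt (h₀ : 0 < c₀) (h₁ : 0 < c₁) (h : c₀ * c₁ < 1 / 4) :
    ∃ v > (0 : ℝ), ∃ q ∈ Ioo (0 : ℝ) (1 / 2), (c₀ ^ v + c₁ ^ v) / (2 * q ^ v) < 1 := by
  obtain ⟨v, hv, hlt⟩ := exists_mean_rpow_lt_one (p := 2 * c₀) (q := 2 * c₁)
    (by positivity) (by positivity) (by nlinarith)
  obtain ⟨q, hq, hqI⟩ := (((eventually_mean_rpow_div_lt_one h₀ h₁ hlt).filter_mono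
    nhdsWithin_le_nhds).and (Ioo_mem_nhdsLT (by norm_num : (0 : ℝ) < 1 / 2))).exists
  exact ⟨v, hv, q, hqI, hq⟩

lemma exists_rpow_mean_lt_of_lt_mul (h₀ : 0 < c₀) (h₁ : 0 < c₁) (h : 1 / 4 < c₀ * c₁) :
    ∃ v < (0 : ℝ), ∃ σ > (1 / 2 : ℝ), (c₀ ^ v + c₁ ^ v) / (2 * σ ^ v) < 1 := by
  obtain ⟨u, hu, hlt⟩ := exists_mean_rpow_lt_one (p := (2 * c₀)⁻¹) (q := (2 * c₁)⁻¹)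
    (by positivity) (by positivity) (by rw [← mul_inv]; exact inv_lt_one_of_one_lt₀ (by nlinarith))
  have hlt' : ((2 * c₀) ^ (-u) + (2 * c₁) ^ (-u)) / 2 < 1 := by
    rwa [Real.rpow_neg (by positivity), Real.rpow_neg (by positivity),
      ← Real.inv_rpow (by positivity), ← Real.inv_rpow (by positivity)]
  obtain ⟨σ, hσ, hσI⟩ := (((eventually_mean_rpow_div_lt_one h₀ h₁ hlt').filter_mono
    nhdsWithin_le_nhds).and (Ioo_mem_nhdsGT (by norm_num : (1 / 2 : ℝ) < 1))).exists
  exact ⟨-u, by linarith, σ, hσI.1, hσ⟩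

end Exponents

section LargeDeviations

variable {c₀ c₁ : ℝ}

lemma ae_eventually_rpow_dyadicWeight_lt (h₀ : 0 < c₀) (h₁ : 0 < c₁) (a b : ℕ) {v r : ℝ}
    (hr : 0 < r) (hlt : (c₀ ^ v + c₁ ^ v) / (2 * r ^ v) < 1) :
    ∀ᵐ t : ℝ, ∀ᶠ n in atTop, 0 ≤ t → ∀ j < 2 ^ n, j ≤ ⌊2 ^ n * t⌋₊ + a →
      ⌊2 ^ n * t⌋₊ ≤ j + b → dyadicWeight c₀ c₁ n j ^ v < (r ^ n) ^ v := by
  have hrv : 0 < r ^ v := Real.rpow_pos_of_pos hr v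
  have hcard (n : ℕ) : (#{j ∈ Finset.range (2 ^ n) |
      (r ^ v) ^ n ≤ dyadicWeight (c₀ ^ v) (c₁ ^ v) n j} : ℝ) ≤
      (2 * ((c₀ ^ v + c₁ ^ v) / (2 * r ^ v))) ^ n := by
    refine (card_pow_le_dyadicWeight_le (by positivity) (by positivity) hrv n).trans_eq ?_
    congr 1
    field_simp
  filter_upwards [ae_eventually_forall_near_floor_not a b (by positivity) hlt hcard] with t ht
  filter_upwards [ht] with n hn ht₀ j hj hja hjb
  rw [dyadicWeight_rpow h₀.le h₁.le, ← Real.rpow_pow_comm hr.le]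
  exact not_le.1 (hn ht₀ j hj hja hjb)

lemma ae_eventually_dyadicWeight_near_lt (h₀ : 0 < c₀) (h₁ : 0 < c₁) (h : c₀ * c₁ < 1 / 4) :
    ∃ q ∈ Ioo (0 : ℝ) (1 / 2), ∀ᵐ t : ℝ, ∀ᶠ n in atTop, 0 ≤ t → ∀ j < 2 ^ n,
      j ≤ ⌊2 ^ n * t⌋₊ + 1 → ⌊2 ^ n * t⌋₊ ≤ j + 1 → dyadicWeight c₀ c₁ n j < q ^ n := by
  obtain ⟨v, hv, q, hq, hlt⟩ := exists_rpow_mean_lt_of_mul_lt h₀ h₁ h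
  refine ⟨q, hq, ?_⟩
  filter_upwards [ae_eventually_rpow_dyadicWeight_lt h₀ h₁ 1 1 hq.1 hlt] with t ht
  filter_upwards [ht] with n hn ht₀ j hj hja hjb
  exact (Real.rpow_lt_rpow_iff (dyadicWeight_pos h₀ h₁ n j).le (pow_nonneg hq.1.le n) hv).1
    (hn ht₀ j hj hja hjb)

lemma ae_eventually_lt_dyadicWeight_floor (h₀ : 0 < c₀) (h₁ : 0 < c₁) (h : 1 / 4 < c₀ * c₁) :
    ∃ σ > (1 / 2 : ℝ), ∀ᵐ t : ℝ, ∀ᶠ n in atTop, 0 ≤ t → ⌊2 ^ n * t⌋₊ < 2 ^ n →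
      σ ^ n < dyadicWeight c₀ c₁ n ⌊2 ^ n * t⌋₊ := by
  obtain ⟨v, hv, σ, hσ, hlt⟩ := exists_rpow_mean_lt_of_lt_mul h₀ h₁ h
  refine ⟨σ, hσ, ?_⟩
  filter_upwards [ae_eventually_rpow_dyadicWeight_lt h₀ h₁ 0 0 (by linarith) hlt] with t ht
  filter_upwards [ht] with n hn ht₀ hk
  by_contra hle
  exact (Real.rpow_le_rpow_of_nonpos (dyadicWeight_pos h₀ h₁ n _) (not_lt.1 hle) hv.le).not_gt
    (hn ht₀ _ hk le_rfl le_rfl)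

end LargeDeviations

section Differentiability

variable {E : Type*} [NormedAddCommGroup E] [NormedSpace ℝ E] {G : ℝ → E} {s : Set ℝ} {t : ℝ}

lemma hasDerivWithinAt_zero_of_norm_sub_le {C q : ℝ} (hq₀ : 0 ≤ q) (hq : q < 1 / 2)
    (h : ∀ᶠ n in atTop, ∀ x ∈ s, |x - t| ≤ (1 / 2) ^ n → ‖G x - G t‖ ≤ C * q ^ n) :
    HasDerivWithinAt G 0 s t := by
  rw [hasDerivWithinAt_iff_isLittleO]
  refine Asymptotics.IsLittleO.of_bound fun c hc => ?_
  have hsmall : Tendsto (fun n : ℕ => 2 * C * (2 * q) ^ n) atTop (𝓝 0) := by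
    simpa using (tendsto_pow_atTop_nhds_zero_of_lt_one (by positivity) (by linarith)).const_mul
      (2 * C)
  obtain ⟨N, hN⟩ := eventually_atTop.1 (h.and (hsmall.eventually (gt_mem_nhds hc)))
  filter_upwards [mem_nhdsWithin_of_mem_nhds (Metric.closedBall_mem_nhds t
    (pow_pos (by norm_num : (0 : ℝ) < 1 / 2) N)), self_mem_nhdsWithin] with x hxt hx
  rw [Metric.mem_closedBall, Real.dist_eq] at hxt
  simp only [smul_zero, sub_zero, Real.norm_eq_abs]
  rcases eq_or_ne x t with rfl | hne
  · simp
  obtain ⟨n, hn₁, hn⟩ := exists_nat_pow_near_of_lt_one (abs_sub_pos.2 hne)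
    (hxt.trans (pow_le_one₀ (by norm_num) (by norm_num))) (by norm_num : (0 : ℝ) < 1 / 2)
    (by norm_num)
  have hNn : N ≤ n := by
    by_contra! hlt
    have := pow_le_pow_of_le_one (by norm_num : (0 : ℝ) ≤ 1 / 2) (by norm_num)
      (show n + 1 ≤ N by omega)
    linarith
  calc ‖G x - G t‖ ≤ C * q ^ n := (hN n hNn).1 x hx hn
    _ = 2 * C * (2 * q) ^ n * (1 / 2) ^ (n + 1) := by
      linear_combination (-(C * q ^ n)) * two_pow_mul_half_pow n
    _ ≤ c * (1 / 2) ^ (n + 1) := by gcongr; exact (hN n hNn).2.le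
    _ ≤ c * |x - t| := by gcongr

lemma tendsto_nhdsWithin_of_abs_sub_le {u : ℕ → ℝ} (hu : ∀ n, u n ∈ s)
    (hut : ∀ n, |u n - t| ≤ (1 / 2) ^ n) : Tendsto u atTop (𝓝[s] t) := by
  have hpow : Tendsto (fun n : ℕ => ((1 : ℝ) / 2) ^ n) atTop (𝓝 0) :=
    tendsto_pow_atTop_nhds_zero_of_lt_one (by norm_num) (by norm_num)
  refine tendsto_nhdsWithin_iff.2 ⟨?_, Eventually.of_forall hu⟩
  exact tendsto_iff_norm_sub_tendsto_zero.2 (squeeze_zero (fun _ => norm_nonneg _)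
    (fun n => (Real.norm_eq_abs _).trans_le (hut n)) hpow)

lemma not_differentiableWithinAt_of_norm_sub_ge {σ δ : ℝ} (l r : ℕ → ℝ)
    (hl : ∀ n, l n ∈ s ∧ l n ≤ t) (hr : ∀ n, r n ∈ s ∧ t ≤ r n)
    (hlr : ∀ n, r n - l n ≤ (1 / 2) ^ n) (hσ : 1 / 2 < σ) (hδ : 0 < δ)
    (h : ∀ᶠ n in atTop, δ * σ ^ n ≤ ‖G (r n) - G (l n)‖) :
    ¬ DifferentiableWithinAt ℝ G s t := by
  intro hd
  obtain ⟨K, hK₀, hK⟩ := hd.isBigO_sub.exists_pos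
  have hl' := (tendsto_nhdsWithin_of_abs_sub_le (fun n => (hl n).1) fun n => by
    rw [abs_sub_comm, abs_of_nonneg (by linarith [(hl n).2])]
    linarith [hlr n, (hr n).2]).eventually hK.bound
  have hr' := (tendsto_nhdsWithin_of_abs_sub_le (fun n => (hr n).1) fun n => by
    rw [abs_of_nonneg (by linarith [(hr n).2])]
    linarith [hlr n, (hl n).2]).eventually hK.bound
  have hgrow : Tendsto (fun n : ℕ => δ * (2 * σ) ^ n) atTop atTop :=
    (tendsto_pow_atTop_atTop_of_one_lt (by linarith)).const_mul_atTop hδ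
  obtain ⟨n, hn, hln, hrn, hbig⟩ :=
    (h.and (hl'.and (hr'.and (hgrow.eventually_gt_atTop K)))).exists
  have hbound : ‖G (r n) - G (l n)‖ ≤ K * (1 / 2) ^ n := by
    calc ‖G (r n) - G (l n)‖ ≤ ‖G (r n) - G t‖ + ‖G (l n) - G t‖ := by
          rw [← norm_sub_rev (G t) (G (l n))]; exact norm_sub_le_norm_sub_add_norm_sub _ _ _
      _ ≤ K * ‖r n - t‖ + K * ‖l n - t‖ := add_le_add hrn hln
      _ = K * (r n - l n) := by
        rw [Real.norm_eq_abs, Real.norm_eq_abs, abs_of_nonneg (by linarith [(hr n).2]),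
          abs_of_nonpos (by linarith [(hl n).2])]
        ring
      _ ≤ K * (1 / 2) ^ n := by gcongr; exact hlr n
  have : δ * (2 * σ) ^ n ≤ K := by
    calc δ * (2 * σ) ^ n = 2 ^ n * (δ * σ ^ n) := by ring
      _ ≤ 2 ^ n * (K * (1 / 2) ^ n) := mul_le_mul_of_nonneg_left (hn.trans hbound) (by positivity)
      _ = K := by linear_combination K * two_pow_mul_half_pow n
  linarith

end Differentiability

namespace DyadicSelfSimilar

variable {E : Type*} [NormedAddCommGroup E] [NormedSpace ℝ E] {c₀ c₁ : ℝ} {G : ℝ → E}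

theorem ae_hasDerivWithinAt_zero (hG : DyadicSelfSimilar c₀ c₁ G)
    (hGc : ContinuousOn G (Icc 0 1)) (h₀ : 0 < c₀) (h₁ : 0 < c₁) (h : c₀ * c₁ < 1 / 4) :
    ∀ᵐ t ∂(volume.restrict (Ioo (0 : ℝ) 1)), HasDerivWithinAt G 0 (Icc (0 : ℝ) 1) t := by
  obtain ⟨D, hD⟩ := Metric.isBounded_iff.1 (isCompact_Icc.image_of_continuousOn hGc).isBounded
  have hD' : ∀ x ∈ Icc (0 : ℝ) 1, ∀ y ∈ Icc (0 : ℝ) 1, ‖G x - G y‖ ≤ D := fun x hx y hy => by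
    rw [← dist_eq_norm]
    exact hD (mem_image_of_mem G hx) (mem_image_of_mem G hy)
  obtain ⟨q, hq, hae⟩ := ae_eventually_dyadicWeight_near_lt h₀ h₁ h
  rw [ae_restrict_iff' measurableSet_Ioo]
  filter_upwards [hae] with t ht htI
  refine hasDerivWithinAt_zero_of_norm_sub_le (C := 2 * D) hq.1.le hq.2 ?_
  filter_upwards [ht] with n hn x hx hxt
  refine (hG.norm_sub_le_of_dyadicWeight_le h₀.le h₁.le hD' (Ioo_subset_Ico_self htI) hx hxt
    fun j hj hja hjb => (hn htI.1.le j hj hja hjb).le).trans_eq ?_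
  ring

theorem ae_not_differentiableWithinAt (hG : DyadicSelfSimilar c₀ c₁ G) (h₀ : 0 < c₀)
    (h₁ : 0 < c₁) (hG₁₀ : G 1 ≠ G 0) (h : 1 / 4 < c₀ * c₁) :
    ∀ᵐ t ∂(volume.restrict (Ioo (0 : ℝ) 1)), ¬ DifferentiableWithinAt ℝ G (Icc (0 : ℝ) 1) t := by
  obtain ⟨σ, hσ, hae⟩ := ae_eventually_lt_dyadicWeight_floor h₀ h₁ h
  rw [ae_restrict_iff' measurableSet_Ioo]
  filter_upwards [hae] with t ht htI
  have h2n (n : ℕ) : (0 : ℝ) < 2 ^ n := by positivity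
  have hk (n : ℕ) : ⌊2 ^ n * t⌋₊ < 2 ^ n := by
    refine (Nat.floor_lt (mul_nonneg (h2n n).le htI.1.le)).2 ?_
    push_cast
    exact mul_lt_of_lt_one_right (h2n n) htI.2
  have hle (n : ℕ) : (⌊2 ^ n * t⌋₊ : ℝ) / 2 ^ n ≤ t := by
    rw [div_le_iff₀ (h2n n), mul_comm t]
    exact Nat.floor_le (mul_nonneg (h2n n).le htI.1.le)
  have hlt (n : ℕ) : t < (⌊2 ^ n * t⌋₊ + 1) / 2 ^ n := by
    rw [lt_div_iff₀ (h2n n), mul_comm t]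
    exact Nat.lt_floor_add_one _
  have hr₁ (n : ℕ) : ((⌊2 ^ n * t⌋₊ : ℝ) + 1) / 2 ^ n ≤ 1 := by
    rw [div_le_one (h2n n)]
    exact_mod_cast hk n
  refine not_differentiableWithinAt_of_norm_sub_ge (fun n => ⌊2 ^ n * t⌋₊ / 2 ^ n)
    (fun n => (⌊2 ^ n * t⌋₊ + 1) / 2 ^ n)
    (fun n => ⟨⟨by positivity, (hle n).trans htI.2.le⟩, hle n⟩)
    (fun n => ⟨⟨htI.1.le.trans (hlt n).le, hr₁ n⟩, (hlt n).le⟩)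
    (fun n => by rw [← sub_div, add_sub_cancel_left, one_div_pow]) hσ
    (norm_pos_iff.2 (sub_ne_zero.2 hG₁₀)) ?_
  filter_upwards [ht] with n hn
  rw [hG.norm_sub_endpoints (hk n), mul_comm]
  exact mul_le_mul_of_nonneg_right (hn htI.1.le (hk n)).le (norm_nonneg _)

end DyadicSelfSimilar

lemma norm_fLin_sub (η : ℂ) (i : ℕ) (x y : ℂ) :
    ‖fLin η i x - fLin η i y‖ = ‖if i = 0 then η else 1 - η‖ * ‖x - y‖ := by
  unfold fLin
  split_ifs <;> simp [← mul_sub, ← map_sub]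

theorem deRham_complex_linear_general (η : ℂ)
    (hη0 : 0 < ‖η‖)
    (hη0' : 0 < ‖1 - η‖)
    (G : ℝ → ℂ)
    (hGc : ContinuousOn G (Set.Icc 0 1))
    (hGeq0 : ∀ t : ℝ, 0 ≤ t → t ≤ 1 / 2 → G t = fLin η 0 (G (2 * t)))
    (hGeq1 : ∀ t : ℝ, 1 / 2 ≤ t → t ≤ 1 → G t = fLin η 1 (G (2 * t - 1)))
    (hG0 : G 0 = 0) (hG1 : G 1 = 1) :
    alphaLin η G = -Real.logb 2 (‖η * (1 - η)‖) / 2 ∧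
    betaLin η G = -Real.logb 2 (‖η * (1 - η)‖) / 2 ∧
    (‖η * (1 - η)‖ < 1 / 4 →
      ∀ᵐ t ∂(volume.restrict (Set.Ioo (0 : ℝ) 1)),
        HasDerivWithinAt G 0 (Set.Icc (0 : ℝ) 1) t) ∧
    (1 / 4 < ‖η * (1 - η)‖ →
      ∀ᵐ t ∂(volume.restrict (Set.Ioo (0 : ℝ) 1)),
        ¬ DifferentiableWithinAt ℝ G (Set.Icc (0 : ℝ) 1) t) := by
  have hη : η ≠ 0 := norm_pos_iff.1 hη0
  have hη' : 1 - η ≠ 0 := norm_pos_iff.1 hη0'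
  have hG : DyadicSelfSimilar ‖η‖ ‖1 - η‖ G := by
    refine dyadicSelfSimilar_of_similar (fun x y => by simpa using norm_fLin_sub η 0 x y)
      (fun x y => by simpa using norm_fLin_sub η 1 x y) (fun x hx => ?_) (fun x hx => ?_)
    · rw [hGeq0 _ (by linarith [hx.1]) (by linarith [hx.2]), mul_div_cancel₀ x two_ne_zero]
    · rw [hGeq1 _ (by linarith [hx.1]) (by linarith [hx.2]),
        show 2 * ((x + 1) / 2) - 1 = x by ring]
  refine ⟨alphaLin_eq hη hη' G, betaLin_eq hη hη' G, fun h => ?_, fun h => ?_⟩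
  · exact hG.ae_hasDerivWithinAt_zero hGc hη0 hη0' (by rwa [norm_mul] at h)
  · exact hG.ae_not_differentiableWithinAt hη0 hη0' (by simp [hG0, hG1])
      (by rwa [norm_mul] at h)

/-- **Example 2.3: complex linear de Rham curves.** Let `η ∈ ℂ` with `0 < |η| < 1` and
`0 < |1-η| < 1`, `f₀(z) = η z̄`, `f₁(z) = η + (1-η) z̄`, and let `G : [0,1] → ℂ` be the
unique continuous solution of `G(t) = f₀(G(2t))` for `0 ≤ t ≤ 1/2`, `G(t) = f₁(G(2t-1))`
for `1/2 ≤ t ≤ 1`, with `G(0) = 0`, `G(1) = 1`. Then `α = β = -log₂|η(1-η)|/2`; if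
`|η(1-η)| < 1/4` the Fréchet derivative of `G` exists and is zero Lebesgue-a.e., and if
`|η(1-η)| > 1/4` then `G` is not Fréchet differentiable at Lebesgue-a.e. `t`. -/
theorem deRham_complex_linear (η : ℂ)
    (hη0 : 0 < ‖η‖) (hη1 : ‖η‖ < 1)
    (hη0' : 0 < ‖1 - η‖) (hη1' : ‖1 - η‖ < 1)
    (G : ℝ → ℂ)
    (hGc : ContinuousOn G (Set.Icc 0 1))
    (hGeq0 : ∀ t : ℝ, 0 ≤ t → t ≤ 1 / 2 → G t = fLin η 0 (G (2 * t)))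
    (hGeq1 : ∀ t : ℝ, 1 / 2 ≤ t → t ≤ 1 → G t = fLin η 1 (G (2 * t - 1)))
    (hG0 : G 0 = 0) (hG1 : G 1 = 1) :
    alphaLin η G = -Real.logb 2 (‖η * (1 - η)‖) / 2 ∧
    betaLin η G = -Real.logb 2 (‖η * (1 - η)‖) / 2 ∧
    (‖η * (1 - η)‖ < 1 / 4 →
      ∀ᵐ t ∂(volume.restrict (Set.Ioo (0 : ℝ) 1)),
        HasDerivWithinAt G 0 (Set.Icc (0 : ℝ) 1) t) ∧
    (1 / 4 < ‖η * (1 - η)‖ →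
      ∀ᵐ t ∂(volume.restrict (Set.Ioo (0 : ℝ) 1)),
        ¬ DifferentiableWithinAt ℝ G (Set.Icc (0 : ℝ) 1) t) :=
  deRham_complex_linear_general η hη0 hη0' G hGc hGeq0 hGeq1 hG0 hG1
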